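/- arXiv:1101.2151 — 6 statements merged into one kernel-verified Lean document; each statement's English description precedes it below -/
import Mathlib

section
/- Let F₂ = F(t₁,t₂) be the free group on two generators and let w ∈ F₂. If the pair (t₁, w t₂ w⁻¹) generates F₂, then w = t₁ⁿ t₂ᵐ for some integers n, m. -/
/-- The free group on two generators. -/
abbrev F2 : Type := FreeGroup (Fin 2)

/-- The first generator `t₁`. -/
def t1 : F2 := FreeGroup.of 0

/-- The second generator `t₂`. -/
def t2 : F2 := FreeGroup.of 1

/-!
Write `w = t₁ⁿ v t₂ᵐ` where the reduced word of `v` neither starts with a `t₁`-letter nor ends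
with a `t₂`-letter. Then `w t₂ w⁻¹` is the conjugate of `u = v t₂ v⁻¹` by `t₁ⁿ`, so
`⟨t₁, w t₂ w⁻¹⟩ ≤ ⟨t₁, u⟩`, and it suffices to show `t₂ ∉ ⟨t₁, u⟩` when `v ≠ 1`.
Every element of `⟨t₁, u⟩` is an alternating product `t₁^a₁ u^b₁ ⋯ t₁^aₖ u^bₖ t₁^c` with all
`bᵢ ≠ 0` and all `aᵢ ≠ 0` for `i > 1`. By the choice of `v`, the concatenation of the reduced
words of the factors `t₁^aᵢ` and `v t₂^bᵢ v⁻¹` is already reduced, so such a product with `k ≥ 1`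
has length at least `2|v| + 1 ≥ 3`, whereas `t₂` has length one.
-/

section AltProd

variable {G : Type*} [Group G] (x y : G)

def altProd : List (ℤ × ℤ) → ℤ → G
  | [], c => x ^ c
  | (a, b) :: l, c => x ^ a * y ^ b * altProd l c

def IsAltReduced : List (ℤ × ℤ) → Prop
  | [] => True
  | (_, b) :: l => b ≠ 0 ∧ (∀ q ∈ l.head?, q.1 ≠ 0) ∧ IsAltReduced l

variable {x y}

theorem IsAltReduced.exists_fst_zpow_mul {l : List (ℤ × ℤ)} (hl : IsAltReduced l) (c d : ℤ) :
    ∃ l' c', IsAltReduced l' ∧ x ^ d * altProd x y l c = altProd x y l' c' := by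
  rcases l with _ | ⟨⟨a, b⟩, l⟩
  · exact ⟨[], d + c, trivial, by simp [altProd, zpow_add]⟩
  · exact ⟨(d + a, b) :: l, c, hl, by simp [altProd, zpow_add, mul_assoc]⟩

theorem IsAltReduced.exists_snd_zpow_mul {l : List (ℤ × ℤ)} (hl : IsAltReduced l) (c : ℤ)
    {e : ℤ} (he : e ≠ 0) :
    ∃ l' c', IsAltReduced l' ∧ y ^ e * altProd x y l c = altProd x y l' c' := by
  rcases l with _ | ⟨⟨a, b⟩, l⟩
  · exact ⟨[(0, e)], c, ⟨he, by simp, trivial⟩, by simp [altProd]⟩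
  obtain ⟨hb, hhead, hl⟩ := hl
  by_cases ha : a = 0
  · subst ha
    by_cases hbe : e + b = 0
    · refine ⟨l, c, hl, ?_⟩
      simp [altProd, ← mul_assoc, ← zpow_add, hbe]
    · exact ⟨(0, e + b) :: l, c, ⟨hbe, hhead, hl⟩, by simp [altProd, ← mul_assoc, ← zpow_add]⟩
  · exact ⟨(0, e) :: (a, b) :: l, c, ⟨he, by simpa using ha, hb, hhead, hl⟩,
      by simp [altProd, mul_assoc]⟩

theorem exists_altProd_of_mem_closure {g : G} (hg : g ∈ Subgroup.closure {x, y}) :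
    ∃ l c, IsAltReduced l ∧ g = altProd x y l c := by
  induction hg using Subgroup.closure_induction_left with
  | one => exact ⟨[], 0, trivial, by simp [altProd]⟩
  | mul_left z hz g _ ih =>
    obtain ⟨l, c, hl, rfl⟩ := ih
    rcases hz with rfl | rfl
    · simpa using hl.exists_fst_zpow_mul (y := y) c 1
    · simpa using hl.exists_snd_zpow_mul (x := x) c one_ne_zero
  | inv_mul_cancel z hz g _ ih =>
    obtain ⟨l, c, hl, rfl⟩ := ih
    rcases hz with rfl | rfl
    · simpa using hl.exists_fst_zpow_mul (y := y) c (-1)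
    · simpa using hl.exists_snd_zpow_mul (x := x) c (e := -1) (by norm_num)

end AltProd

namespace FreeGroup

variable {α : Type*} [DecidableEq α]

theorem toWord_of_zpow (a : α) (n : ℤ) :
    (of a ^ n).toWord = List.replicate n.natAbs (a, decide (0 ≤ n)) := by
  obtain ⟨k, rfl | rfl⟩ := Int.eq_nat_or_neg n
  · simp [toWord_of_pow]
  · rcases k with _ | k
    · simp
    · rw [zpow_neg, zpow_natCast, toWord_inv, toWord_of_pow]
      simp [invRev, List.map_replicate]
      omega

theorem fst_of_mem_toWord_of_zpow {a : α} {n : ℤ} {p : α × Bool}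
    (hp : p ∈ (of a ^ n).toWord) : p.1 = a := by
  rw [toWord_of_zpow, List.mem_replicate] at hp
  rw [hp.2]

theorem toWord_of_zpow_ne_nil {a : α} {n : ℤ} (hn : n ≠ 0) : (of a ^ n).toWord ≠ [] := by
  simpa [toWord_of_zpow] using hn

theorem forall_mem_getLast?_toWord_inv {a : α} {g : FreeGroup α} :
    (∀ p ∈ g⁻¹.toWord.getLast?, p.1 ≠ a) ↔ ∀ p ∈ g.toWord.head?, p.1 ≠ a := by
  simp only [toWord_inv, invRev, List.getLast?_reverse, List.head?_map, Option.mem_map]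
  exact ⟨fun h p hp => h (p.1, !p.2) ⟨p, hp, rfl⟩, by rintro h _ ⟨p, hp, rfl⟩; exact h p hp⟩

theorem toWord_mul_of_fst_ne {x y : FreeGroup α}
    (h : ∀ p ∈ x.toWord.getLast?, ∀ q ∈ y.toWord.head?, p.1 ≠ q.1) :
    (x * y).toWord = x.toWord ++ y.toWord := by
  have hred : IsReduced (x.toWord ++ y.toWord) :=
    List.isChain_append.mpr ⟨isReduced_toWord, isReduced_toWord,
      fun p hp q hq hpq => absurd hpq (h p hp q hq)⟩
  rw [toWord_mul, hred.reduce_eq]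

theorem exists_eq_zpow_mul_of_head (i : α) (w : FreeGroup α) :
    ∃ (n : ℤ) (v : FreeGroup α), w = of i ^ n * v ∧ ∀ p ∈ v.toWord.head?, p.1 ≠ i := by
  suffices ∀ L : List (α × Bool), IsReduced L →
      ∃ (n : ℤ) (v : FreeGroup α), mk L = of i ^ n * v ∧ ∀ p ∈ v.toWord.head?, p.1 ≠ i by
    simpa only [mk_toWord] using this w.toWord isReduced_toWord
  intro L hL
  induction L with
  | nil => exact ⟨0, 1, by simp [one_eq_mk], by simp⟩
  | cons p L ih =>
    obtain ⟨k, b⟩ := p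
    by_cases hk : k = i
    · subst hk
      obtain ⟨n, v, hL', hv⟩ := ih (List.isChain_cons.mp hL).2
      obtain ⟨e, he⟩ : ∃ e : ℤ, mk [(k, b)] = of k ^ e := by
        cases b
        · exact ⟨-1, by rw [zpow_neg_one, of, inv_mk]; rfl⟩
        · exact ⟨1, by rw [zpow_one]; rfl⟩
      refine ⟨e + n, v, ?_, hv⟩
      rw [← List.singleton_append, ← mul_mk, hL', he, zpow_add, mul_assoc]
    · refine ⟨0, mk ((k, b) :: L), by simp, ?_⟩
      rw [toWord_mk, hL.reduce_eq]
      simpa using hk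

theorem exists_eq_mul_zpow_of_getLast (j : α) (w : FreeGroup α) :
    ∃ (m : ℤ) (v : FreeGroup α), w = v * of j ^ m ∧ ∀ p ∈ v.toWord.getLast?, p.1 ≠ j := by
  obtain ⟨n, v, hw, hv⟩ := exists_eq_zpow_mul_of_head j w⁻¹
  exact ⟨-n, v⁻¹, by rw [zpow_neg, ← mul_inv_rev, ← hw, inv_inv],
    forall_mem_getLast?_toWord_inv.mpr hv⟩

theorem exists_eq_zpow_mul_mul_zpow (i j : α) (w : FreeGroup α) :
    ∃ (n m : ℤ) (v : FreeGroup α), w = of i ^ n * v * of j ^ m ∧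
      (∀ p ∈ v.toWord.head?, p.1 ≠ i) ∧ ∀ p ∈ v.toWord.getLast?, p.1 ≠ j := by
  obtain ⟨n, u, rfl, hu⟩ := exists_eq_zpow_mul_of_head i w
  obtain ⟨m, v, rfl, hv⟩ := exists_eq_mul_zpow_of_getLast j u
  refine ⟨n, m, v, (mul_assoc _ _ _).symm, fun p hp => ?_, hv⟩
  rw [toWord_mul_of_fst_ne (fun p hp q hq => ?_)] at hu
  · exact hu p (List.mem_head?_append_of_mem_head? hp)
  · rw [fst_of_mem_toWord_of_zpow (List.mem_of_mem_head? hq)]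
    exact hv p hp

section Conj

variable {i j : α} {v : FreeGroup α}

theorem toWord_conj_of_zpow (hvj : ∀ p ∈ v.toWord.getLast?, p.1 ≠ j) {b : ℤ} (hb : b ≠ 0) :
    (v * of j ^ b * v⁻¹).toWord = v.toWord ++ (of j ^ b).toWord ++ invRev v.toWord := by
  have hleft : (v * of j ^ b).toWord = v.toWord ++ (of j ^ b).toWord :=
    toWord_mul_of_fst_ne fun p hp q hq => by
      rw [fst_of_mem_toWord_of_zpow (List.mem_of_mem_head? hq)]
      exact hvj p hp
  have hinv : ∀ q ∈ v⁻¹.toWord.head?, q.1 ≠ j :=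
    forall_mem_getLast?_toWord_inv.mp (by rwa [inv_inv])
  have hjunction : ∀ p ∈ (v * of j ^ b).toWord.getLast?, ∀ q ∈ v⁻¹.toWord.head?, p.1 ≠ q.1 := by
    rw [hleft, List.getLast?_append_of_ne_nil _ (toWord_of_zpow_ne_nil hb)]
    intro p hp q hq
    rw [fst_of_mem_toWord_of_zpow (List.mem_of_mem_getLast? hp)]
    exact (hinv q hq).symm
  rw [toWord_mul_of_fst_ne hjunction, hleft, toWord_inv]

theorem fst_ne_of_mem_head?_toWord_conj (hij : i ≠ j) (hvi : ∀ p ∈ v.toWord.head?, p.1 ≠ i)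
    (hvj : ∀ p ∈ v.toWord.getLast?, p.1 ≠ j) {b : ℤ} (hb : b ≠ 0) :
    ∀ p ∈ (v * of j ^ b * v⁻¹).toWord.head?, p.1 ≠ i := by
  rw [toWord_conj_of_zpow hvj hb, List.append_assoc]
  intro p hp
  rcases hv : v.toWord with _ | ⟨q, L⟩
  · rw [hv, List.nil_append, List.head?_append_of_ne_nil _ (toWord_of_zpow_ne_nil hb)] at hp
    rw [fst_of_mem_toWord_of_zpow (List.mem_of_mem_head? hp)]
    exact hij.symm
  · rw [hv, List.cons_append, List.head?_cons] at hp
    exact hvi p (by rw [hv]; exact hp)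

theorem fst_ne_of_mem_getLast?_toWord_conj (hij : i ≠ j) (hvi : ∀ p ∈ v.toWord.head?, p.1 ≠ i)
    (hvj : ∀ p ∈ v.toWord.getLast?, p.1 ≠ j) {b : ℤ} (hb : b ≠ 0) :
    ∀ p ∈ (v * of j ^ b * v⁻¹).toWord.getLast?, p.1 ≠ i := by
  rw [← inv_inv (v * of j ^ b * v⁻¹), forall_mem_getLast?_toWord_inv, ← conj_zpow, ← zpow_neg,
    conj_zpow]
  exact fst_ne_of_mem_head?_toWord_conj hij hvi hvj (neg_ne_zero.mpr hb)

theorem toWord_altProd_cons (hij : i ≠ j) (hvi : ∀ p ∈ v.toWord.head?, p.1 ≠ i)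
    (hvj : ∀ p ∈ v.toWord.getLast?, p.1 ≠ j) {a b c : ℤ} (hb : b ≠ 0) {l : List (ℤ × ℤ)}
    (hl : ∀ p ∈ (altProd (of i) (v * of j * v⁻¹) l c).toWord.head?, p.1 = i) :
    (altProd (of i) (v * of j * v⁻¹) ((a, b) :: l) c).toWord =
      (of i ^ a).toWord ++ ((v * of j ^ b * v⁻¹).toWord ++
        (altProd (of i) (v * of j * v⁻¹) l c).toWord) := by
  have hright : ((v * of j ^ b * v⁻¹) * altProd (of i) (v * of j * v⁻¹) l c).toWord =
      (v * of j ^ b * v⁻¹).toWord ++ (altProd (of i) (v * of j * v⁻¹) l c).toWord :=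
    toWord_mul_of_fst_ne fun p hp q hq => by
      rw [hl q hq]
      exact fst_ne_of_mem_getLast?_toWord_conj hij hvi hvj hb p hp
  have hconj : (v * of j ^ b * v⁻¹).toWord ≠ [] := by
    simp [toWord_conj_of_zpow hvj hb, toWord_of_zpow_ne_nil hb]
  have hleft : ∀ p ∈ (of i ^ a).toWord.getLast?,
      ∀ q ∈ ((v * of j ^ b * v⁻¹) * altProd (of i) (v * of j * v⁻¹) l c).toWord.head?,
      p.1 ≠ q.1 := by
    rw [hright, List.head?_append_of_ne_nil _ hconj]
    intro p hp q hq
    rw [fst_of_mem_toWord_of_zpow (List.mem_of_mem_getLast? hp)]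
    exact (fst_ne_of_mem_head?_toWord_conj hij hvi hvj hb q hq).symm
  rw [altProd, conj_zpow, mul_assoc, toWord_mul_of_fst_ne hleft, hright]

theorem fst_eq_of_mem_head?_toWord_altProd (hij : i ≠ j) (hvi : ∀ p ∈ v.toWord.head?, p.1 ≠ i)
    (hvj : ∀ p ∈ v.toWord.getLast?, p.1 ≠ j) {l : List (ℤ × ℤ)} (hl : IsAltReduced l)
    (hl₀ : ∀ q ∈ l.head?, q.1 ≠ 0) (c : ℤ) :
    ∀ p ∈ (altProd (of i) (v * of j * v⁻¹) l c).toWord.head?, p.1 = i := by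
  induction l with
  | nil => exact fun p hp => fst_of_mem_toWord_of_zpow (List.mem_of_mem_head? hp)
  | cons q l ih =>
    obtain ⟨a, b⟩ := q
    obtain ⟨hb, hl₁, hl⟩ := hl
    rw [toWord_altProd_cons hij hvi hvj hb (ih hl hl₁),
      List.head?_append_of_ne_nil _ (toWord_of_zpow_ne_nil (hl₀ (a, b) rfl))]
    exact fun p hp => fst_of_mem_toWord_of_zpow (List.mem_of_mem_head? hp)

theorem of_notMem_closure_conj (hij : i ≠ j) (hv : v ≠ 1) (hvi : ∀ p ∈ v.toWord.head?, p.1 ≠ i)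
    (hvj : ∀ p ∈ v.toWord.getLast?, p.1 ≠ j) :
    of j ∉ Subgroup.closure {of i, v * of j * v⁻¹} := by
  intro h
  obtain ⟨l, c, hl, hjl⟩ := exists_altProd_of_mem_closure h
  rcases l with _ | ⟨⟨a, b⟩, l⟩
  · refine hij (fst_of_mem_toWord_of_zpow (n := c) (p := (j, true)) ?_).symm
    rw [← altProd, ← hjl, toWord_of]
    exact List.mem_singleton_self _
  · obtain ⟨hb, hl₁, hl⟩ := hl
    have hlen := congrArg List.length (congrArg toWord hjl)
    rw [toWord_altProd_cons hij hvi hvj hb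
      (fst_eq_of_mem_head?_toWord_altProd hij hvi hvj hl hl₁ c), toWord_conj_of_zpow hvj hb] at hlen
    have hv₀ : v.toWord.length ≠ 0 := by simpa [toWord_eq_nil_iff] using hv
    simp only [toWord_of, List.length_singleton, List.length_append, invRev_length,
      toWord_of_zpow, List.length_replicate] at hlen
    omega

end Conj

theorem exists_eq_zpow_mul_zpow_of_mem_closure {i j : α} (hij : i ≠ j) {w : FreeGroup α}
    (h : of j ∈ Subgroup.closure {of i, w * of j * w⁻¹}) : ∃ n m : ℤ, w = of i ^ n * of j ^ m := by
  obtain ⟨n, m, v, rfl, hvi, hvj⟩ := exists_eq_zpow_mul_mul_zpow i j w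
  by_cases hv : v = 1
  · exact ⟨n, m, by rw [hv, mul_one]⟩
  refine absurd (Subgroup.closure_le _ |>.mpr ?_ h) (of_notMem_closure_conj hij hv hvi hvj)
  have hi : of i ∈ Subgroup.closure {of i, v * of j * v⁻¹} := Subgroup.subset_closure (by simp)
  have hu : v * of j * v⁻¹ ∈ Subgroup.closure {of i, v * of j * v⁻¹} :=
    Subgroup.subset_closure (by simp)
  have hconj : of i ^ n * v * of j ^ m * of j * (of i ^ n * v * of j ^ m)⁻¹ =
      of i ^ n * (v * of j * v⁻¹) * (of i ^ n)⁻¹ := by group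
  rw [Set.insert_subset_iff, Set.singleton_subset_iff, SetLike.mem_coe, SetLike.mem_coe, hconj]
  exact ⟨hi, mul_mem (mul_mem (zpow_mem hi n) hu) (inv_mem (zpow_mem hi n))⟩

end FreeGroup

/-- If `(t₁, w t₂ w⁻¹)` generates `F₂`, then `w = t₁ⁿ t₂ᵐ` for some integers `n, m`. -/
theorem stmt1 (w : F2)
    (h : Subgroup.closure ({t1, w * t2 * w⁻¹} : Set F2) = ⊤) :
    ∃ n m : ℤ, w = t1 ^ n * t2 ^ m :=
  FreeGroup.exists_eq_zpow_mul_zpow_of_mem_closure (i := 0) (j := 1) (by decide)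
    (h ▸ Subgroup.mem_top t2)
end

section
/- In the free group F₂ on generators t₁, t₂, the element w₁ = t₁ t₂ t₁⁻¹ t₂⁻¹ t₁ is not primitive. -/
/-- An element of `F₂` is primitive if it belongs to some generating pair of `F₂`
(by Nielsen's theorem, any generating pair is automatically a free basis). -/
def Primitive (w : F2) : Prop := ∃ z : F2, Subgroup.closure ({w, z} : Set F2) = ⊤

theorem MonoidHom.commute_apply_of_closure_pair_eq_top {G H : Type*} [Group G] [Group H]
    (f : G →* H) {w z : G} (hgen : Subgroup.closure {w, z} = ⊤) (hw : f w = 1) (x y : G) :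
    Commute (f x) (f y) := by
  have hrange : f.range ≤ Subgroup.zpowers (f z) := by
    rw [f.range_eq_map, ← hgen, MonoidHom.map_closure, Set.image_pair, hw, Subgroup.closure_le]
    rintro _ (rfl | rfl)
    exacts [one_mem _, Subgroup.mem_zpowers _]
  obtain ⟨m, hm⟩ := hrange ⟨x, rfl⟩
  obtain ⟨n, hn⟩ := hrange ⟨y, rfl⟩
  rw [← hm, ← hn]
  exact Commute.zpow_zpow_self (f z) m n

def toPermFinThree : F2 →* Equiv.Perm (Fin 3) :=
  FreeGroup.lift ![finRotate 3, Equiv.swap 0 1]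

/-- The element `w₁ = t₁ t₂ t₁⁻¹ t₂⁻¹ t₁` is not primitive in `F₂`. -/
theorem stmt9 : ¬ Primitive (t1 * t2 * t1⁻¹ * t2⁻¹ * t1) := by
  rintro ⟨z, hz⟩
  have hw : toPermFinThree (t1 * t2 * t1⁻¹ * t2⁻¹ * t1) = 1 := by
    simp only [toPermFinThree, t1, t2, map_mul, map_inv, FreeGroup.lift_apply_of]
    decide
  have hne : toPermFinThree t1 * toPermFinThree t2 ≠ toPermFinThree t2 * toPermFinThree t1 := by
    simp only [toPermFinThree, t1, t2, FreeGroup.lift_apply_of]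
    decide
  exact hne (toPermFinThree.commute_apply_of_closure_pair_eq_top hz hw t1 t2).eq
end

section
/- Let F₂ be the free group on generators t₁, t₂, let w₁ = t₁ t₂ t₁⁻¹ t₂⁻¹ t₁ and w₂ = t₂, and let J be the subgroup of F₂ generated by w₁ and w₂. Then J does not contain any pair of elements (z₁, z₂) such that (z₁, z₂) is a free basis of F₂. -/
/-!
A pair inside a proper subgroup generates at most that subgroup, so it suffices to see that
`J ≠ F₂`. Send `t₁` to the 3-cycle `(0 1 2)` and `t₂` to the transposition `(0 1)` in `S₃`: then
`w₁` maps to `1` and `w₂` fixes the point `2`, so `J` lies in the preimage of the stabilizer of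
`2`, while `t₁` moves `2`.
-/

open Subgroup

theorem Subgroup.closure_pair_ne_top_of_mem {G : Type*} [Group G] {H : Subgroup G} (hH : H ≠ ⊤)
    {x y : G} (hx : x ∈ H) (hy : y ∈ H) : closure ({x, y} : Set G) ≠ ⊤ :=
  ne_top_of_le_ne_top hH <|
    (closure_le H).mpr <| Set.insert_subset hx (Set.singleton_subset_iff.mpr hy)

def toPerm3 : F2 →* Equiv.Perm (Fin 3) := FreeGroup.lift ![finRotate 3, Equiv.swap 0 1]

theorem toPerm3_t1 : toPerm3 t1 = finRotate 3 := FreeGroup.lift_apply_of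

theorem toPerm3_t2 : toPerm3 t2 = Equiv.swap 0 1 := FreeGroup.lift_apply_of

theorem closure_w_le_comap_stabilizer :
    closure ({t1 * t2 * t1⁻¹ * t2⁻¹ * t1, t2} : Set F2) ≤
      (MulAction.stabilizer (Equiv.Perm (Fin 3)) (2 : Fin 3)).comap toPerm3 := by
  rw [closure_le]
  rintro x (rfl | rfl) <;>
    simp only [SetLike.mem_coe, mem_comap, MulAction.mem_stabilizer_iff, map_mul, map_inv,
      toPerm3_t1, toPerm3_t2] <;> decide

theorem t1_not_mem_comap_stabilizer :
    t1 ∉ (MulAction.stabilizer (Equiv.Perm (Fin 3)) (2 : Fin 3)).comap toPerm3 := by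
  simp only [mem_comap, MulAction.mem_stabilizer_iff, toPerm3_t1]
  decide

theorem closure_w_ne_top : closure ({t1 * t2 * t1⁻¹ * t2⁻¹ * t1, t2} : Set F2) ≠ ⊤ :=
  fun h => t1_not_mem_comap_stabilizer <| closure_w_le_comap_stabilizer (h ▸ mem_top t1)

/-- With `w₁ = t₁ t₂ t₁⁻¹ t₂⁻¹ t₁`, `w₂ = t₂`, the subgroup `J = ⟨w₁, w₂⟩` contains no pair
of elements forming a free basis (= generating pair) of `F₂`. -/
theorem stmt10 (J : Subgroup F2)
    (hJ : J = Subgroup.closure ({t1 * t2 * t1⁻¹ * t2⁻¹ * t1, t2} : Set F2)) :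
    ∀ z₁ z₂ : F2, z₁ ∈ J → z₂ ∈ J →
      Subgroup.closure ({z₁, z₂} : Set F2) ≠ ⊤ := by
  subst hJ
  exact fun _ _ => closure_pair_ne_top_of_mem closure_w_ne_top
end

section
/- Let p : X̂ → X be a regular covering of path-connected spaces with basepoints x̂₀ ↦ x₀, let A ⊆ X be a path-connected subset containing x₀ with inclusion i : A → X, and let Â = p⁻¹(A). Then Â is path-connected if and only if p₊(π₁(X̂, x̂₀)) · i₊(π₁(A, x₀)) = π₁(X, x₀). -/
/-!
The fundamental group `G = π₁(X, x₀)` acts on the fiber `F = p⁻¹(x₀)` by monodromy. Since `X̂` is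
path-connected the action is transitive, and the stabilizer of `x̂₀` is `K = p₊ π₁(X̂, x̂₀)`.
Lifting paths shows that a point of `F` is joined to `x̂₀` inside `Â` exactly when it is the image of
`x̂₀` under some element of `H = i₊ π₁(A, x₀)`, and that every point of `Â` is joined inside `Â` to a
point of `F` (as `A` is path-connected). Hence `Â` is path-connected iff `H` acts transitively on
`F`, i.e. iff `G = H K`; taking inverses, this is `G = K H`.
-/

open CategoryTheory

noncomputable def inducedHom {X Y : TopCat} (f : X ⟶ Y) (x : X) :
    FundamentalGroup X x →* FundamentalGroup Y (f x) :=
  (FundamentalGroupoid.fundamentalGroupoidFunctor.map f).mapEnd (FundamentalGroupoid.mk x)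

theorem MulAction.forall_exists_smul_eq_iff_forall_eq_mul {G α : Type*} [Group G]
    [MulAction G α] [IsPretransitive G α] (H : Subgroup G) (a : α) :
    (∀ b : α, ∃ h ∈ H, h • a = b) ↔ ∀ g : G, ∃ u ∈ stabilizer G a, ∃ v ∈ H, g = u * v := by
  constructor
  · intro hH g
    obtain ⟨h, hh, hha⟩ := hH (g⁻¹ • a)
    refine ⟨g * h, ?_, h⁻¹, inv_mem hh, by group⟩
    rw [mem_stabilizer_iff, mul_smul, hha, smul_inv_smul]
  · intro hG b
    obtain ⟨g, rfl⟩ := exists_smul_eq G a b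
    obtain ⟨u, hu, v, hv, hg⟩ := hG g⁻¹
    refine ⟨v⁻¹, inv_mem hv, ?_⟩
    rw [← inv_inv g, hg, mul_inv_rev, mul_smul, mem_stabilizer_iff.mp (inv_mem hu)]

theorem eqRec_range_inducedHom {Y X : TopCat} (f : Y ⟶ X) (y : Y) {x : X} (h : f y = x) :
    (h ▸ (inducedHom f y).range : Subgroup (FundamentalGroup X x)) =
      (FundamentalGroup.mapOfEq f.hom h).range := by
  subst h
  ext γ
  simp only [MonoidHom.mem_range, FundamentalGroup.mapOfEq_apply,
    Path.Homotopic.Quotient.cast_rfl_rfl]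
  rfl

theorem FundamentalGroup.mem_range_mapOfEq_subtype_iff {X : Type*} [TopologicalSpace X]
    {A : Set X} (i : C(A, X)) (hi : ∀ a, i a = a) (a : A) (γ : FundamentalGroup X a) :
    γ ∈ (mapOfEq i (hi a)).range ↔
      ∃ δ : Path (a : X) a, (∀ t, δ t ∈ A) ∧ Path.Homotopic.Quotient.mk δ = γ := by
  obtain rfl : i = ⟨Subtype.val, continuous_subtype_val⟩ := ContinuousMap.ext hi
  constructor
  · rintro ⟨γ, rfl⟩
    obtain ⟨δ, rfl⟩ := Path.Homotopic.Quotient.mk_surjective γ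
    refine ⟨δ.map continuous_subtype_val, fun t => (δ t).2, ?_⟩
    rw [mapOfEq_apply, Path.Homotopic.Quotient.cast_rfl_rfl]
    rfl
  · rintro ⟨δ, hδ, rfl⟩
    refine ⟨Path.Homotopic.Quotient.mk ⟨⟨fun t => ⟨δ t, hδ t⟩, by fun_prop⟩,
      Subtype.ext δ.source, Subtype.ext δ.target⟩, ?_⟩
    rw [mapOfEq_apply, Path.Homotopic.Quotient.cast_rfl_rfl]
    rfl

namespace IsCoveringMap

variable {E X : Type*} [TopologicalSpace E] [TopologicalSpace X] {p : E → X}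

theorem mem_range_mapOfEq_iff_monodromy_eq (cov : IsCoveringMap p) {e : E} {x : X}
    (h : p e = x) (γ : FundamentalGroup X x) :
    γ ∈ (FundamentalGroup.mapOfEq ⟨p, cov.continuous⟩ h).range ↔
      cov.monodromy γ ⟨e, h⟩ = ⟨e, h⟩ := by
  subst h
  constructor
  · rintro ⟨γ, rfl⟩
    refine cov.monodromy_eq_of_map_eq γ ?_
    rw [FundamentalGroup.mapOfEq_apply, Path.Homotopic.Quotient.cast_rfl_rfl,
      Path.Homotopic.Quotient.cast_rfl_rfl]
  · intro h
    refine ⟨(cov.liftPathQuotient γ ⟨e, rfl⟩).cast rfl congr($h.symm), ?_⟩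
    rw [FundamentalGroup.mapOfEq_apply, Path.Homotopic.Quotient.map_cast, map_liftPathQuotient]
    obtain ⟨δ, rfl⟩ := Path.Homotopic.Quotient.mk_surjective γ
    rfl

theorem isPretransitive_fundamentalGroupMulAction (cov : IsCoveringMap p) [PathConnectedSpace E]
    (x : X) :
    letI := cov.fundamentalGroupMulAction x
    MulAction.IsPretransitive (FundamentalGroup X x) (p ⁻¹' {x}) := by
  let _ := cov.fundamentalGroupMulAction x
  refine ⟨fun e e' => ?_⟩
  let Γ := Path.Homotopic.Quotient.mk (PathConnectedSpace.somePath e.1 e'.1)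
  exact ⟨(Γ.map ⟨p, cov.continuous⟩).cast (Eq.symm e.2) (Eq.symm e'.2),
    cov.monodromy_eq_of_map_eq Γ rfl⟩

theorem joinedIn_preimage_liftPath (cov : IsCoveringMap p) {A : Set X} (δ : C(unitInterval, X))
    (hδ : ∀ t, δ t ∈ A) (e : E) (he : δ 0 = p e) :
    JoinedIn (p ⁻¹' A) e (cov.liftPath δ e he 1) :=
  ⟨⟨cov.liftPath δ e he, cov.liftPath_zero .., rfl⟩, fun t => by
    show p (cov.liftPath δ e he t) ∈ A
    rw [← Function.comp_apply (f := p), cov.liftPath_lifts]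
    exact hδ t⟩

theorem joinedIn_preimage_iff (cov : IsCoveringMap p) {A : Set X} {x : X} (e₀ e : p ⁻¹' {x}) :
    JoinedIn (p ⁻¹' A) e₀ e ↔
      ∃ δ : Path x x, (∀ t, δ t ∈ A) ∧ cov.monodromy (.mk δ) e₀ = e := by
  constructor
  · rintro ⟨Γ, hΓ⟩
    exact ⟨(Γ.map cov.continuous).cast (Eq.symm e₀.2) (Eq.symm e.2), hΓ,
      cov.monodromy_eq_of_map_eq (.mk Γ) rfl⟩
  · rintro ⟨δ, hδ, rfl⟩
    exact cov.joinedIn_preimage_liftPath δ hδ e₀ _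

theorem isPathConnected_preimage_iff (cov : IsCoveringMap p) {A : Set X}
    (hA : IsPathConnected A) {x : X} (hx : x ∈ A) (e₀ : p ⁻¹' {x}) :
    IsPathConnected (p ⁻¹' A) ↔ ∀ e : p ⁻¹' {x}, JoinedIn (p ⁻¹' A) e₀ e := by
  have hfiber (e : p ⁻¹' {x}) : (e : E) ∈ p ⁻¹' A := by
    rw [Set.mem_preimage, (e.2 : p e = x)]
    exact hx
  refine ⟨fun h e => h.joinedIn _ (hfiber e₀) _ (hfiber e), fun h => ⟨e₀, hfiber e₀, ?_⟩⟩
  intro e he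
  have hδ := hA.joinedIn _ he x hx
  have hlift := cov.joinedIn_preimage_liftPath _ hδ.somePath_mem e hδ.somePath.source
  refine (h ⟨_, ?_⟩).trans hlift.symm
  exact (congr_fun (cov.liftPath_lifts ..) 1).trans hδ.somePath.target

end IsCoveringMap

theorem stmt15_general {Xhat X : TopCat} (p : Xhat ⟶ X) (hp : IsCoveringMap p)
    [PathConnectedSpace Xhat]
    (A : Set X) (hA : IsPathConnected A)
    (i : TopCat.of (↥A) ⟶ X) (hi : ∀ a : ↥A, i a = (a : X))
    (a₀ : ↥A) (xhat₀ : Xhat) (hpx : p xhat₀ = (a₀ : X)) :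
    IsPathConnected (p ⁻¹' A) ↔
      ∀ g : FundamentalGroup X (a₀ : X),
        ∃ u ∈ (hpx ▸ (inducedHom p xhat₀).range : Subgroup (FundamentalGroup X (a₀ : X))),
          ∃ v ∈ (hi a₀ ▸ (inducedHom i a₀).range : Subgroup (FundamentalGroup X (a₀ : X))),
            g = u * v := by
  let _ := hp.fundamentalGroupMulAction (a₀ : X)
  have := hp.isPretransitive_fundamentalGroupMulAction (a₀ : X)
  let e₀ : p ⁻¹' {(a₀ : X)} := ⟨xhat₀, hpx⟩
  have hK : (hpx ▸ (inducedHom p xhat₀).range : Subgroup (FundamentalGroup X (a₀ : X))) =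
      MulAction.stabilizer _ e₀ := by
    ext u
    rw [eqRec_range_inducedHom]
    exact hp.mem_range_mapOfEq_iff_monodromy_eq hpx u
  rw [eqRec_range_inducedHom i, hK, hp.isPathConnected_preimage_iff hA a₀.2 e₀,
    ← MulAction.forall_exists_smul_eq_iff_forall_eq_mul]
  refine forall_congr' fun e => ?_
  rw [hp.joinedIn_preimage_iff]
  simp_rw [FundamentalGroup.mem_range_mapOfEq_subtype_iff i.hom hi, exists_exists_and_eq_and]
  rfl

/-- Let `p : X̂ → X` be a regular covering of path-connected spaces, `A ⊆ X` a path-connected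
subset containing the basepoint `x₀ = p x̂₀`, with inclusion `i : A → X`.  Then `p⁻¹(A)` is
path-connected if and only if `p₊(π₁(X̂, x̂₀)) · i₊(π₁(A, a₀)) = π₁(X, x₀)`. -/
theorem stmt15 {Xhat X : TopCat} (p : Xhat ⟶ X) (hp : IsCoveringMap p)
    [PathConnectedSpace Xhat] [PathConnectedSpace X]
    (A : Set X) (hA : IsPathConnected A)
    (i : TopCat.of (↥A) ⟶ X) (hi : ∀ a : ↥A, i a = (a : X))
    (a₀ : ↥A) (xhat₀ : Xhat) (hpx : p xhat₀ = (a₀ : X))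
    (hreg : (MonoidHom.range (inducedHom p xhat₀)).Normal) :
    IsPathConnected (p ⁻¹' A) ↔
      ∀ g : FundamentalGroup X (a₀ : X),
        ∃ u ∈ (hpx ▸ (inducedHom p xhat₀).range : Subgroup (FundamentalGroup X (a₀ : X))),
          ∃ v ∈ (hi a₀ ▸ (inducedHom i a₀).range : Subgroup (FundamentalGroup X (a₀ : X))),
            g = u * v :=
  stmt15_general p hp A hA i hi a₀ xhat₀ hpx
end

section
/- Let F₂ be the free group on generators t₁, t₂ and let w₁ ∈ F₂ be an element that is not a conjugate of any power t₁ᵏ. Then there exists n ∈ ℕ such that the reduced word representing t₁ⁿ w₁ t₁⁻ⁿ has the form t₁^{k} z t₁^{-h} with h ≥ 1, k ≥ 1 and z a nonempty reduced word whose first and last letters are t₂^{±1}. -/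
namespace FreeGroup

variable {α : Type*} {a : α}

theorem mk_mem_zpowers_of {L : List (α × Bool)} (hL : ∀ x ∈ L, x.1 = a) :
    mk L ∈ Subgroup.zpowers (of a) := by
  induction L with
  | nil => exact Subgroup.one_mem _
  | cons x L ih =>
    obtain ⟨b, c⟩ := x
    obtain rfl : b = a := hL _ List.mem_cons_self
    rw [← List.singleton_append, ← mul_mk]
    refine Subgroup.mul_mem _ ?_ (ih fun y hy => hL y (List.mem_cons_of_mem _ hy))
    cases c
    · rw [show mk [(b, false)] = (of b)⁻¹ by rw [of, inv_mk]; rfl]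
      exact Subgroup.inv_mem _ (Subgroup.mem_zpowers _)
    · exact Subgroup.mem_zpowers _

theorem isReduced_replicate_append_append_replicate {z : List (α × Bool)} (hz : IsReduced z)
    (hne : z ≠ []) (hhead : ∀ x ∈ z.head?, x.1 ≠ a) (hlast : ∀ x ∈ z.getLast?, x.1 ≠ a)
    (p q : ℕ) (b c : Bool) :
    IsReduced (List.replicate p (a, b) ++ z ++ List.replicate q (a, c)) := by
  have hrep (n : ℕ) (d : Bool) : IsReduced (List.replicate n (a, d)) :=
    List.isChain_replicate_of_rel _ fun _ => rfl
  refine List.isChain_append.mpr ⟨List.isChain_append.mpr ⟨hrep p b, hz, ?_⟩, hrep q c, ?_⟩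
  · intro x hx y hy hxy
    rw [List.eq_of_mem_replicate (List.mem_of_mem_getLast? hx)] at hxy
    exact absurd hxy.symm (hhead y hy)
  · intro x hx y hy hxy
    rw [List.getLast?_append_of_ne_nil _ hne] at hx
    rw [List.eq_of_mem_replicate (List.mem_of_mem_head? hy)] at hxy
    exact absurd hxy (hlast x hx)

theorem toWord_pow_mul_mk_mul_inv_pow [DecidableEq α] {z : List (α × Bool)} (hz : IsReduced z)
    (hne : z ≠ []) (hhead : ∀ x ∈ z.head?, x.1 ≠ a) (hlast : ∀ x ∈ z.getLast?, x.1 ≠ a)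
    (p q : ℕ) :
    (of a ^ p * mk z * (of a ^ q)⁻¹).toWord =
      List.replicate p (a, true) ++ z ++ List.replicate q (a, false) := by
  have hpow (n : ℕ) : of a ^ n = mk (List.replicate n (a, true)) := by
    rw [← toWord_of_pow, mk_toWord]
  rw [hpow, hpow, inv_mk, mul_mk, mul_mk, toWord_mk]
  simp only [invRev, List.map_replicate, List.reverse_replicate, Bool.not_true]
  exact (isReduced_replicate_append_append_replicate hz hne hhead hlast p q true false).reduce_eq

theorem exists_eq_zpow_mul_mk_mul_zpow [DecidableEq α] {w : FreeGroup α}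
    (hw : w ∉ Subgroup.zpowers (of a)) :
    ∃ (i j : ℤ) (z : List (α × Bool)), IsReduced z ∧ z ≠ [] ∧ (∀ x ∈ z.head?, x.1 ≠ a) ∧
      (∀ x ∈ z.getLast?, x.1 ≠ a) ∧ w = of a ^ i * mk z * of a ^ j := by
  set p : α × Bool → Bool := fun x => x.1 = a
  set D := w.toWord.dropWhile p
  set z := D.rdropWhile p
  set A := w.toWord.takeWhile p
  set B := D.rtakeWhile p
  have hsplit : A ++ z ++ B = w.toWord := by
    rw [List.append_assoc, List.rdropWhile_append_rtakeWhile, List.takeWhile_append_dropWhile]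
  have hw_eq : w = mk A * mk z * mk B := by rw [mul_mk, mul_mk, hsplit, mk_toWord]
  obtain ⟨i, hi⟩ := Subgroup.mem_zpowers_iff.mp <| mk_mem_zpowers_of (a := a) (L := A)
    fun x hx => by simpa [p] using List.mem_takeWhile_imp hx
  obtain ⟨j, hj⟩ := Subgroup.mem_zpowers_iff.mp <| mk_mem_zpowers_of (a := a) (L := B)
    fun x hx => by simpa [p] using List.mem_rtakeWhile_imp hx
  have hne : z ≠ [] := by
    intro hz
    rw [hz, ← one_eq_mk, mul_one, ← hi, ← hj, ← zpow_add] at hw_eq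
    exact hw (hw_eq ▸ Subgroup.zpow_mem_zpowers _ _)
  have hprefix : z <+: D := List.rdropWhile_prefix p D
  refine ⟨i, j, z, isReduced_toWord.infix ⟨A, B, hsplit⟩, hne, ?_, ?_, by rw [hi, hj, hw_eq]⟩
  · intro x hx
    rw [List.head?_eq_some_head hne, Option.mem_some_iff, hprefix.head hne] at hx
    subst hx
    simpa [p] using List.head_dropWhile_not p (hprefix.ne_nil hne)
  · intro x hx
    rw [List.getLast?_eq_some_getLast hne, Option.mem_some_iff] at hx
    subst hx
    simpa [p] using List.rdropWhile_last_not p D hne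

end FreeGroup

theorem exists_pow_conj_eq_pow_mul_mul_inv_pow {G : Type*} [Group G] (x y : G) (i j : ℤ) :
    ∃ n k h : ℕ, 1 ≤ k ∧ 1 ≤ h ∧
      x ^ n * (x ^ i * y * x ^ j) * (x ^ n)⁻¹ = x ^ k * y * (x ^ h)⁻¹ := by
  set n := i.natAbs + j.natAbs + 1
  refine ⟨n, (n + i).toNat, (n - j).toNat, by omega, by omega, ?_⟩
  simp only [← zpow_natCast, Int.toNat_of_nonneg (by omega : (0 : ℤ) ≤ n + i),
    Int.toNat_of_nonneg (by omega : (0 : ℤ) ≤ n - j)]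
  group

theorem Option.map_fst_eq_some_one_of_ne_zero {β : Type*} {o : Option (Fin 2 × β)}
    (hne : o ≠ none) (h : ∀ x ∈ o, x.1 ≠ 0) : o.map Prod.fst = some 1 := by
  obtain ⟨x, rfl⟩ := Option.ne_none_iff_exists'.mp hne
  exact congrArg some (Fin.eq_one_of_ne_zero _ (h x rfl))

/-- If `w₁ ∈ F₂` is not conjugate to any power of `t₁`, then for some `n ∈ ℕ` the reduced
word of `t₁ⁿ w₁ t₁⁻ⁿ` has the form `t₁^k z t₁^{-h}` with `h, k ≥ 1` and `z` a nonempty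
reduced word whose first and last letters are `t₂^{±1}`. -/
theorem stmt16 (w₁ : F2) (hw : ∀ (g : F2) (k : ℤ), w₁ ≠ g * t1 ^ k * g⁻¹) :
    ∃ (n : ℕ) (k h : ℕ) (z : List (Fin 2 × Bool)),
      1 ≤ k ∧ 1 ≤ h ∧ z ≠ [] ∧
      (z.head?).map Prod.fst = some 1 ∧
      (z.getLast?).map Prod.fst = some 1 ∧
      (t1 ^ n * w₁ * (t1 ^ n)⁻¹).toWord =
        List.replicate k ((0 : Fin 2), true) ++ z ++ List.replicate h ((0 : Fin 2), false) := by
  have hnot : w₁ ∉ Subgroup.zpowers t1 := by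
    rintro ⟨k, hk⟩
    exact hw 1 k (by simpa using hk.symm)
  obtain ⟨i, j, z, hz, hne, hhead, hlast, hw₁⟩ := FreeGroup.exists_eq_zpow_mul_mk_mul_zpow hnot
  obtain ⟨n, k, h, hk, hh, hconj⟩ :=
    exists_pow_conj_eq_pow_mul_mul_inv_pow (FreeGroup.of 0) (.mk z) i j
  refine ⟨n, k, h, z, hk, hh, hne, Option.map_fst_eq_some_one_of_ne_zero (by simpa) hhead,
    Option.map_fst_eq_some_one_of_ne_zero (by simpa) hlast, ?_⟩
  rw [t1, hw₁, hconj]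
  exact FreeGroup.toWord_pow_mul_mk_mul_inv_pow hz hne hhead hlast k h
end

section
/- Let F₂ be the free group on generators t₁, t₂ and let φ : F(g₁,g₂,n₁,n₂) → F₂ be the homomorphism from the free group on four letters defined by φ(g₁) = w₁, φ(g₂) = w₂, φ(n₁) = φ(n₂) = 1, where w₁, w₂ ∈ F₂ freely generate a rank-2 subgroup. Then ker φ equals the normal closure of {n₁, n₂} in F(g₁,g₂,n₁,n₂). -/
open FreeGroup

theorem MonoidHom.ker_le_of_mk_eq_mk_comp {G H : Type*} [Group G] [Group H] {f : G →* H}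
    (s : H →* G) {N : Subgroup G} [N.Normal] (h : ∀ x : G, (x : G ⧸ N) = s (f x)) : f.ker ≤ N := by
  intro x hx
  rw [← QuotientGroup.eq_one_iff, h x, f.mem_ker.mp hx, s.map_one, QuotientGroup.mk_one]

theorem FreeGroup.ker_eq_of_mk_of_eq_mk_comp {α H : Type*} [Group H]
    {f : FreeGroup α →* H} (s : H →* FreeGroup α) {N : Subgroup (FreeGroup α)} [N.Normal]
    (hN : N ≤ f.ker) (hs : ∀ a, (of a : FreeGroup α ⧸ N) = s (f (of a))) : f.ker = N := by
  refine le_antisymm (f.ker_le_of_mk_eq_mk_comp s fun x => ?_) hN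
  have hgen : QuotientGroup.mk' N = (QuotientGroup.mk' N).comp (s.comp f) := ext_hom _ _ hs
  exact DFunLike.congr_fun hgen x

/-- Let `φ : F(g₁,g₂,n₁,n₂) → F₂` send `g₁ ↦ w₁`, `g₂ ↦ w₂`, `n₁, n₂ ↦ 1`, where `w₁, w₂`
freely generate a rank-2 subgroup of `F₂`.  Then `ker φ` is the normal closure of `{n₁, n₂}`. -/
theorem stmt19 (w₁ w₂ : F2)
    (hfree : Function.Injective
      (FreeGroup.lift (fun x : Bool => if x then w₁ else w₂) : FreeGroup Bool →* F2))
    (φ : FreeGroup (Fin 4) →* F2)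
    (hφ : φ = FreeGroup.lift (![w₁, w₂, 1, 1] : Fin 4 → F2)) :
    φ.ker = Subgroup.normalClosure
      ({FreeGroup.of 2, FreeGroup.of 3} : Set (FreeGroup (Fin 4))) := by
  let π : FreeGroup (Fin 4) →* FreeGroup Bool := lift ![of true, of false, 1, 1]
  have hφπ : φ = (lift fun x : Bool => if x then w₁ else w₂).comp π := by
    subst hφ
    ext i
    fin_cases i <;> simp [π]
  rw [hφπ, MonoidHom.ker_comp_of_injective _ _ hfree]
  refine ker_eq_of_mk_of_eq_mk_comp (lift fun b => if b then of 0 else of 1) ?_ fun i => ?_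
  · refine Subgroup.normalClosure_le_normal ?_
    rintro _ (rfl | rfl) <;> simp [π]
  · fin_cases i <;> simp [π, QuotientGroup.eq_one_iff] <;>
      exact Subgroup.subset_normalClosure (by simp)
end
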